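/- If g is a slowly varying function on [1, ∞) (i.e., g is positive measurable and g(λx)/g(x) → 1 as x → ∞ for every λ > 0) and ε > 0, then the sequence (max_{1 ≤ k ≤ n} g(k) k^ε) / (g(n) n^ε) is bounded over n ≥ 1. -/

import Mathlib

/-!
Writing `h t = log g(eᵗ)`, slow variation says `h(t + u) - h(t) → 0` for each fixed `u`.
For measurable `h` this convergence is uniform in `u ∈ [0, 1]`: the sets of `t ∈ [0, 2]` where
`h(x + t)` and `h(x)` differ by at least `δ/2` have measure tending to `0`, so for large `x` two
of them, one shifted by `u`, cannot cover `[u, 2]`, and a common good `t` links `h(x + u)` to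
`h(x)`. Chaining unit steps gives `|h t - h s| ≤ δ (t - s) + δ` for large `s ≤ t`, i.e.
`g(x) x^ε ≤ e^ε g(y) y^ε` for large `x ≤ y` when `δ = ε`. The finitely many remaining
indices only change the constant.
-/

open Filter MeasureTheory Set Real

theorem exists_mem_notMem_and_sub_notMem {G : Type*} [MeasurableSpace G] [AddGroup G]
    [MeasurableAdd G] (μ : Measure G) [μ.IsAddRightInvariant] {S A B : Set G} (u : G)
    (hμ : μ A + μ B < μ S) : ∃ t ∈ S, t ∉ A ∧ t - u ∉ B := by
  by_contra! hcover
  have hS : S ⊆ A ∪ (fun t => t - u) ⁻¹' B := fun t ht => by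
    by_cases htA : t ∈ A
    · exact Or.inl htA
    · exact Or.inr (hcover t ht htA)
  refine ((measure_mono (μ := μ) hS).trans (measure_union_le _ _)).not_gt ?_
  simpa [sub_eq_add_neg] using hμ

section UniformConvergence

variable {h : ℝ → ℝ}

theorem tendsto_measure_inter_setOf_le_abs_sub (hmeas : Measurable h)
    (hs : ∀ u, Tendsto (fun x => h (x + u) - h x) atTop (nhds 0))
    (μ : Measure ℝ) {s : Set ℝ} (hsm : MeasurableSet s) (hμs : μ s ≠ ⊤) {η : ℝ}
    (hη : 0 < η) :
    Tendsto (fun x => μ (s ∩ {t | η ≤ |h (x + t) - h x|})) atTop (nhds 0) := by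
  have hmble : ∀ x, MeasurableSet (s ∩ {t | η ≤ |h (x + t) - h x|}) := fun x =>
    hsm.inter <| measurableSet_le measurable_const
      ((hmeas.comp (measurable_const.add measurable_id)).sub measurable_const).abs
  have hlim : ∀ t, ∀ᶠ x in atTop,
      t ∈ s ∩ {t | η ≤ |h (x + t) - h x|} ↔ t ∈ (∅ : Set ℝ) := by
    intro t
    have hsmall : ∀ᶠ x in atTop, |h (x + t) - h x| < η := by
      simpa using (hs t).abs.eventually_lt_const (by simpa using hη)
    filter_upwards [hsmall] with x hx
    simp [hx]
  simpa using tendsto_measure_of_tendsto_indicator atTop hmble hsm hμs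
    (Eventually.of_forall fun _ => inter_subset_left) hlim

theorem eventually_forall_mem_Icc_abs_sub_le (hmeas : Measurable h)
    (hs : ∀ u, Tendsto (fun x => h (x + u) - h x) atTop (nhds 0)) {δ : ℝ} (hδ : 0 < δ) :
    ∀ᶠ x in atTop, ∀ u ∈ Icc (0 : ℝ) 1, |h (x + u) - h x| ≤ δ := by
  set bad : ℝ → Set ℝ := fun x => Icc 0 2 ∩ {t | δ / 2 ≤ |h (x + t) - h x|}
  have hsmall : ∀ᶠ x in atTop, volume (bad x) < 1 / 2 :=
    (tendsto_measure_inter_setOf_le_abs_sub hmeas hs volume measurableSet_Icc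
      (by simp [Real.volume_Icc]) (half_pos hδ)).eventually_lt_const (by norm_num)
  obtain ⟨X, hX⟩ := eventually_atTop.mp hsmall
  filter_upwards [eventually_ge_atTop X] with x hx u ⟨hu0, hu1⟩
  have hcover : volume (bad x) + volume (bad (x + u)) < volume (Icc u 2) := by
    calc volume (bad x) + volume (bad (x + u)) < 1 / 2 + 1 / 2 :=
          ENNReal.add_lt_add (hX x hx) (hX (x + u) (by linarith))
      _ = ENNReal.ofReal 1 := by rw [ENNReal.add_halves, ENNReal.ofReal_one]
      _ ≤ volume (Icc u 2) := by
        rw [Real.volume_Icc]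
        exact ENNReal.ofReal_le_ofReal (by linarith)
  obtain ⟨t, ⟨hut, ht2⟩, htx, htxu⟩ := exists_mem_notMem_and_sub_notMem volume u hcover
  have hx_t : |h (x + t) - h x| < δ / 2 := by
    by_contra! hbig
    exact htx ⟨⟨by linarith, ht2⟩, hbig⟩
  have hxu_t : |h (x + t) - h (x + u)| < δ / 2 := by
    by_contra! hbig
    refine htxu ⟨⟨by linarith, by linarith⟩, ?_⟩
    show δ / 2 ≤ |h (x + u + (t - u)) - h (x + u)|
    rwa [add_add_sub_cancel]
  calc |h (x + u) - h x| ≤ |h (x + u) - h (x + t)| + |h (x + t) - h x| := abs_sub_le _ _ _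
    _ ≤ δ := by rw [abs_sub_comm]; linarith

theorem abs_sub_le_mul_add_of_forall_mem_Icc {δ X : ℝ} (hδ : 0 ≤ δ)
    (H : ∀ x ≥ X, ∀ u ∈ Icc (0 : ℝ) 1, |h (x + u) - h x| ≤ δ) {x y : ℝ} (hx : X ≤ x)
    (hxy : x ≤ y) : |h y - h x| ≤ δ * (y - x) + δ := by
  have chain : ∀ n : ℕ, ∀ y, x ≤ y → y ≤ x + n → |h y - h x| ≤ δ * n := by
    intro n
    induction n with
    | zero => intro y hxy hyx; simp [le_antisymm (by simpa using hyx) hxy]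
    | succ n ih =>
      intro y hxy hyx
      set z := max x (y - 1)
      have hxz : x ≤ z := le_max_left _ _
      have hzy : z ≤ y := max_le hxy (by linarith)
      have hzx : z ≤ x + n := max_le (by linarith [n.cast_nonneg (α := ℝ)])
        (by push_cast at hyx; linarith)
      have hyz : |h y - h z| ≤ δ := by
        simpa using H z (hx.trans hxz) (y - z)
          ⟨by linarith, by linarith [le_max_right x (y - 1)]⟩
      calc |h y - h x| ≤ |h y - h z| + |h z - h x| := abs_sub_le _ _ _
        _ ≤ δ + δ * n := add_le_add hyz (ih z hxz hzx)
        _ = δ * (n + 1 : ℕ) := by push_cast; ring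
  calc |h y - h x| ≤ δ * ⌈y - x⌉₊ := chain _ y hxy (by linarith [Nat.le_ceil (y - x)])
    _ ≤ δ * (y - x + 1) := by gcongr; exact (Nat.ceil_lt_add_one (by linarith)).le
    _ = δ * (y - x) + δ := by ring

end UniformConvergence

section SlowlyVarying

variable {g : ℝ → ℝ}

theorem tendsto_log_comp_exp_add_sub (hg_pos : ∀ x ≥ (1 : ℝ), 0 < g x)
    (hg_slow : ∀ l : ℝ, 0 < l → Tendsto (fun x => g (l * x) / g x) atTop (nhds 1)) (u : ℝ) :
    Tendsto (fun x => log (g (exp (x + u))) - log (g (exp x))) atTop (nhds 0) := by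
  have hlim : Tendsto (fun x => log (g (exp u * exp x) / g (exp x))) atTop (nhds (log 1)) :=
    (continuousAt_log one_ne_zero).tendsto.comp ((hg_slow _ (exp_pos u)).comp tendsto_exp_atTop)
  rw [log_one] at hlim
  refine hlim.congr' ?_
  filter_upwards [eventually_ge_atTop 0, eventually_ge_atTop (-u)] with x hx hxu
  rw [← exp_add, add_comm u, log_div (hg_pos _ (one_le_exp (by linarith))).ne'
    (hg_pos _ (one_le_exp hx)).ne']

theorem eventually_mul_rpow_le_exp_mul (hg_pos : ∀ x ≥ (1 : ℝ), 0 < g x)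
    (hg_meas : Measurable g)
    (hg_slow : ∀ l : ℝ, 0 < l → Tendsto (fun x => g (l * x) / g x) atTop (nhds 1))
    {ε : ℝ} (hε : 0 < ε) :
    ∀ᶠ x in atTop, ∀ y ≥ x, g x * x ^ ε ≤ exp ε * (g y * y ^ ε) := by
  obtain ⟨X, hX⟩ := eventually_atTop.mp <| eventually_forall_mem_Icc_abs_sub_le
    (h := fun t => log (g (exp t)))
    (measurable_log.comp (hg_meas.comp measurable_exp))
    (tendsto_log_comp_exp_add_sub hg_pos hg_slow) hε
  have hexp : ∀ x ≥ (1 : ℝ), g x * x ^ ε = exp (log (g (exp (log x))) + ε * log x) := by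
    intro x hx
    have hx0 : 0 < x := by linarith
    rw [exp_add, exp_log hx0, exp_log (hg_pos x hx), rpow_def_of_pos hx0, mul_comm ε]
  filter_upwards [eventually_ge_atTop (max 1 (exp X))] with x hx y hxy
  have hx1 : 1 ≤ x := (le_max_left _ _).trans hx
  have hXx : X ≤ log x := (le_log_iff_exp_le (by linarith)).mpr ((le_max_right _ _).trans hx)
  have hlog : log x ≤ log y := log_le_log (by linarith) hxy
  have hpotter := abs_le.mp <| abs_sub_le_mul_add_of_forall_mem_Icc
    (h := fun t => log (g (exp t))) hε.le hX hXx hlog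
  rw [hexp x hx1, hexp y (hx1.trans hxy), ← exp_add, exp_le_exp]
  linarith [hpotter.1]

end SlowlyVarying

theorem exists_forall_le_mul_of_eventually_le_mul {F : ℕ → ℝ} (hF : ∀ n ≥ 1, 0 < F n)
    {C : ℝ} (hC : ∀ᶠ k in atTop, ∀ n ≥ k, F k ≤ C * F n) :
    ∃ D, ∀ k n, 1 ≤ k → k ≤ n → F k ≤ D * F n := by
  obtain ⟨N, hN⟩ := eventually_atTop.mp (hC.and (eventually_ge_atTop 1))
  have hN1 : 1 ≤ N := (hN N le_rfl).2
  have hne : (Finset.Icc 1 N).Nonempty := Finset.nonempty_Icc.mpr hN1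
  set m := (Finset.Icc 1 N).inf' hne F
  set M := (Finset.Icc 1 N).sup' hne F
  set C' := max C 1
  have hm : 0 < m := by
    obtain ⟨k, hk, hkm⟩ := Finset.exists_mem_eq_inf' hne F
    rw [show m = F k from hkm]
    exact hF k (Finset.mem_Icc.mp hk).1
  have hM : 0 ≤ M :=
    (hF 1 le_rfl).le.trans (Finset.le_sup' F (Finset.mem_Icc.mpr ⟨le_rfl, hN1⟩))
  have hlower : ∀ n ≥ 1, m ≤ C' * F n := by
    intro n hn
    rcases le_total n N with hnN | hNn
    · calc m ≤ F n := Finset.inf'_le F (Finset.mem_Icc.mpr ⟨hn, hnN⟩)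
        _ ≤ C' * F n := le_mul_of_one_le_left (hF n hn).le (le_max_right _ _)
    · calc m ≤ F N := Finset.inf'_le F (Finset.mem_Icc.mpr ⟨hN1, le_rfl⟩)
        _ ≤ C * F n := (hN N le_rfl).1 n hNn
        _ ≤ C' * F n := by gcongr; exacts [(hF n hn).le, le_max_left _ _]
  have hupper : ∀ k n, 1 ≤ k → k ≤ n → F k ≤ M + C' * F n := by
    intro k n hk hkn
    have hCn : 0 ≤ C' * F n := mul_nonneg (by positivity) (hF n (hk.trans hkn)).le
    rcases le_total k N with hkN | hNk
    · calc F k ≤ M := Finset.le_sup' F (Finset.mem_Icc.mpr ⟨hk, hkN⟩)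
        _ ≤ M + C' * F n := le_add_of_nonneg_right hCn
    · calc F k ≤ C * F n := (hN k hNk).1 n hkn
        _ ≤ C' * F n := by gcongr; exacts [(hF n (hk.trans hkn)).le, le_max_left _ _]
        _ ≤ M + C' * F n := le_add_of_nonneg_left hM
  refine ⟨(M / m + 1) * C', fun k n hk hkn => ?_⟩
  calc F k ≤ M + C' * F n := hupper k n hk hkn
    _ ≤ M / m * (C' * F n) + C' * F n := by
        gcongr
        rw [div_mul_eq_mul_div, le_div_iff₀ hm]
        exact mul_le_mul_of_nonneg_left (hlower n (hk.trans hkn)) hM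
    _ = (M / m + 1) * C' * F n := by ring

/-- If `g` is slowly varying on `[1, ∞)` (positive, measurable, and `g(λx)/g(x) → 1` as
`x → ∞` for every `λ > 0`) and `ε > 0`, then the sequence
`(max_{1 ≤ k ≤ n} g(k) k^ε) / (g(n) n^ε)` is bounded over `n ≥ 1`. -/
theorem max_slowly_varying_rpow_div_bounded
    (g : ℝ → ℝ) (hg_pos : ∀ x ≥ (1 : ℝ), 0 < g x) (hg_meas : Measurable g)
    (hg_slow : ∀ l : ℝ, 0 < l →
      Tendsto (fun x : ℝ => g (l * x) / g x) atTop (nhds 1))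
    (ε : ℝ) (hε : 0 < ε) :
    ∃ C : ℝ, ∀ n : ℕ, ∀ hn : 1 ≤ n,
      ((Finset.Icc 1 n).sup' (Finset.nonempty_Icc.mpr hn)
          (fun k : ℕ => g k * (k : ℝ) ^ ε)) / (g n * (n : ℝ) ^ ε) ≤ C := by
  set F : ℕ → ℝ := fun k => g k * (k : ℝ) ^ ε
  have hF : ∀ n ≥ 1, 0 < F n := fun n hn =>
    mul_pos (hg_pos _ (by exact_mod_cast hn)) (rpow_pos_of_pos (Nat.cast_pos.mpr hn) ε)
  have hF_almost_mono : ∀ᶠ k in atTop, ∀ n ≥ k, F k ≤ exp ε * F n :=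
    (tendsto_natCast_atTop_atTop.eventually
      (eventually_mul_rpow_le_exp_mul hg_pos hg_meas hg_slow hε)).mono
        fun k hk n hkn => hk n (by exact_mod_cast hkn)
  obtain ⟨D, hD⟩ := exists_forall_le_mul_of_eventually_le_mul hF hF_almost_mono
  refine ⟨D, fun n hn => ?_⟩
  rw [div_le_iff₀ (hF n hn)]
  exact Finset.sup'_le _ _ fun k hk => hD k n (Finset.mem_Icc.mp hk).1 (Finset.mem_Icc.mp hk).2
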